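/- arXiv:2301.11534 — 3 statements merged into one kernel-verified Lean document; each statement's English description precedes it below -/
import Mathlib

section
/- Let X be a topological space and Δ ⊆ CL(X) a family closed under finite unions containing all singletons. A family ζ of finite tuples of open subsets of X is a π_V(Δ)-network of X if and only if the collection 𝒰 = {⟨V₁,…,Vₙ⟩ : (V₁,…,Vₙ) ∈ ζ} is an open cover of Δ with the subspace Vietoris topology. -/
open Set

universe u

variable {X : Type u}

def CLfam (X : Type u) [TopologicalSpace X] (Δ : Set (Set X)) : Prop :=
  (∀ A ∈ Δ, IsClosed A ∧ A.Nonempty) ∧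
  (∀ A ∈ Δ, ∀ B ∈ Δ, A ∪ B ∈ Δ) ∧
  (∀ x : X, ({x} : Set X) ∈ Δ)

def vbasic (L : List (Set X)) : Set (Set X) :=
  {A | (A ⊆ (⋃ V ∈ L, V)) ∧ ∀ V ∈ L, (A ∩ V).Nonempty}

def vietoris (X : Type u) [TopologicalSpace X] : TopologicalSpace (Set X) :=
  TopologicalSpace.generateFrom
    {S | ∃ L : List (Set X), L ≠ [] ∧ (∀ V ∈ L, IsOpen V) ∧ S = vbasic L}

def vietorisSub [TopologicalSpace X] (Δ : Set (Set X)) : TopologicalSpace ↥Δ :=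
  TopologicalSpace.induced Subtype.val (vietoris X)

def piVnetwork [TopologicalSpace X] (Δ : Set (Set X)) (ζ : Set (List (Set X))) : Prop :=
  ∀ U ∈ compl '' Δ, ∃ L ∈ ζ, ∃ F : Set X, F.Finite ∧
    (∀ V ∈ L, (F ∩ V).Nonempty) ∧ (⋂ V ∈ L, Vᶜ) ⊆ U ∧ F ∩ U = ∅

open scoped Topology

theorem isOpen_vbasic [TopologicalSpace X] {L : List (Set X)} (hL : L ≠ [])
    (hopen : ∀ V ∈ L, IsOpen V) : IsOpen[vietoris X] (vbasic L) :=
  TopologicalSpace.GenerateOpen.basic _ ⟨L, hL, hopen, rfl⟩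

theorem isOpen_preimage_vbasic [TopologicalSpace X] (Δ : Set (Set X)) {L : List (Set X)}
    (hL : L ≠ []) (hopen : ∀ V ∈ L, IsOpen V) :
    IsOpen[vietorisSub Δ] {A : ↥Δ | (A : Set X) ∈ vbasic L} :=
  ⟨vbasic L, isOpen_vbasic hL hopen, rfl⟩

theorem biInter_compl_subset_compl_iff {L : List (Set X)} {A : Set X} :
    (⋂ V ∈ L, Vᶜ) ⊆ Aᶜ ↔ A ⊆ ⋃ V ∈ L, V := by
  rw [← compl_iUnion₂, compl_subset_compl]

theorem exists_finite_subset_forall_inter_nonempty {L : List (Set X)} {A : Set X}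
    (h : ∀ V ∈ L, (A ∩ V).Nonempty) :
    ∃ F ⊆ A, F.Finite ∧ ∀ V ∈ L, (F ∩ V).Nonempty := by
  choose f hf using fun V : {V // V ∈ L} => h V V.2
  have : Finite {V // V ∈ L} := L.finite_toSet.to_subtype
  exact ⟨range f, range_subset_iff.2 fun V => (hf V).1, finite_range f,
    fun V hV => ⟨f ⟨V, hV⟩, mem_range_self _, (hf ⟨V, hV⟩).2⟩⟩

/- The finite set `F` of `piVnetwork` is just a choice of one point of `A` in each `V ∈ L`
(`F ∩ Aᶜ = ∅` says `F ⊆ A`), so it exists iff `A` meets every `V ∈ L`. -/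
theorem piVnetwork_iff_forall_mem_vbasic [TopologicalSpace X] (Δ : Set (Set X))
    (ζ : Set (List (Set X))) : piVnetwork Δ ζ ↔ ∀ A ∈ Δ, ∃ L ∈ ζ, A ∈ vbasic L := by
  simp only [piVnetwork, forall_mem_image, ← disjoint_iff_inter_eq_empty,
    disjoint_compl_right_iff_subset, biInter_compl_subset_compl_iff]
  refine forall₂_congr fun A _ => exists_congr fun L => and_congr_right fun _ => ⟨?_, ?_⟩
  · rintro ⟨F, -, hFL, hcover, hFA⟩
    exact ⟨hcover, fun V hV => (hFL V hV).mono (inter_subset_inter_left V hFA)⟩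
  · rintro ⟨hcover, hmeet⟩
    obtain ⟨F, hFA, hF, hFL⟩ := exists_finite_subset_forall_inter_nonempty hmeet
    exact ⟨F, hF, hFL, hcover, hFA⟩

theorem stmt1_general [TopologicalSpace X] (Δ : Set (Set X))
    (ζ : Set (List (Set X))) (hζ : ∀ L ∈ ζ, L ≠ [] ∧ ∀ V ∈ L, IsOpen V) :
    piVnetwork Δ ζ ↔
      ((∀ L ∈ ζ, @IsOpen ↥Δ (vietorisSub Δ) {A : ↥Δ | (A : Set X) ∈ vbasic L}) ∧
        ∀ A : ↥Δ, ∃ L ∈ ζ, (A : Set X) ∈ vbasic L) := by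
  have hopen : ∀ L ∈ ζ, IsOpen[vietorisSub Δ] {A : ↥Δ | (A : Set X) ∈ vbasic L} :=
    fun L hL => isOpen_preimage_vbasic Δ (hζ L hL).1 (hζ L hL).2
  rw [piVnetwork_iff_forall_mem_vbasic]
  exact ⟨fun hcov => ⟨hopen, fun A => hcov A A.2⟩, fun h A hA => h.2 ⟨A, hA⟩⟩

theorem stmt1 [TopologicalSpace X] (Δ : Set (Set X)) (hΔ : CLfam X Δ)
    (ζ : Set (List (Set X))) (hζ : ∀ L ∈ ζ, L ≠ [] ∧ ∀ V ∈ L, IsOpen V) :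
    piVnetwork Δ ζ ↔
      ((∀ L ∈ ζ, @IsOpen ↥Δ (vietorisSub Δ) {A : ↥Δ | (A : Set X) ∈ vbasic L}) ∧
        ∀ A : ↥Δ, ∃ L ∈ ζ, (A : Set X) ∈ vbasic L) :=
  stmt1_general Δ ζ hζ
end

section
/- Let 𝒜 be an uncountable almost disjoint family on ω with ⋃𝒜 = ω, X = Ψ(𝒜) the Mrówka–Isbell space, and ζ = {(V₁,…,Vₙ) : Vᵢ = {Aᵢ} ∪ (Aᵢ \ Dᵢ) for some Aᵢ ∈ 𝒜 and finite Dᵢ ⊆ ω}. Then ζ is a π_V(𝕂(X))-network of X, where 𝕂(X) denotes the family of nonempty compact subsets of X. -/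
/-!
Every point of Ψ(𝒜) lies in a basic neighbourhood {A} ∪ A of some A ∈ 𝒜, so a compact K is
covered by finitely many such neighbourhoods, each of which may be taken to meet K. Listing
them and picking one point of K in each gives the required tuple and finite set F: F meets
every Vᵢ, misses Kᶜ, and ⋂ Vᵢᶜ is disjoint from K.
-/

open Set

universe u

variable {X : Type u}

/-- The Mrówka–Isbell space Ψ(𝒜): points of ℕ are isolated and each A ∈ 𝒜 has
basic neighborhoods {A} ∪ (A \ D) for finite D ⊆ ℕ. -/
def psiSpace (𝒜 : Set (Set ℕ)) : TopologicalSpace (ℕ ⊕ ↥𝒜) :=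
  TopologicalSpace.generateFrom
    ({S | ∃ n : ℕ, S = {Sum.inl n}} ∪
     {S | ∃ A : ↥𝒜, ∃ D : Set ℕ, D.Finite ∧
        S = {Sum.inr A} ∪ Sum.inl '' ((A : Set ℕ) \ D)})

/-- an almost disjoint family of infinite subsets of ℕ -/
def ADfamily (𝒜 : Set (Set ℕ)) : Prop :=
  (∀ A ∈ 𝒜, A.Infinite) ∧ ∀ A ∈ 𝒜, ∀ B ∈ 𝒜, A ≠ B → (A ∩ B).Finite

section

variable [TopologicalSpace X]

theorem IsCompact.exists_finite_subcover_meeting {K : Set X} (hK : IsCompact K)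
    {𝒲 : Set (Set X)} (hopen : ∀ W ∈ 𝒲, IsOpen W) (hcov : K ⊆ ⋃₀ 𝒲) :
    ∃ s ⊆ 𝒲, s.Finite ∧ K ⊆ ⋃₀ s ∧ ∀ W ∈ s, (K ∩ W).Nonempty := by
  obtain ⟨s, hs𝒲, hsfin, hKs⟩ :=
    hK.elim_finite_subcover_image (c := id) hopen (by simpa [sUnion_eq_biUnion] using hcov)
  refine ⟨{W ∈ s | (K ∩ W).Nonempty}, fun W hW => hs𝒲 hW.1, hsfin.subset (sep_subset _ _),
    fun x hx => ?_, fun W hW => hW.2⟩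
  obtain ⟨W, hW, hxW⟩ := mem_iUnion₂.mp (hKs hx)
  exact ⟨W, ⟨hW, x, hx, hxW⟩, hxW⟩

theorem piVnetwork_compacts_of_isOpen_cover {𝒲 : Set (Set X)} (hopen : ∀ W ∈ 𝒲, IsOpen W)
    (hcov : ⋃₀ 𝒲 = univ) {ζ : Set (List (Set X))}
    (hζ : ∀ L : List (Set X), L ≠ [] → (∀ V ∈ L, V ∈ 𝒲) → L ∈ ζ) :
    piVnetwork {K : Set X | IsCompact K ∧ K.Nonempty} ζ := by
  rintro _ ⟨K, ⟨hK, ⟨x, hx⟩⟩, rfl⟩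
  obtain ⟨s, hs𝒲, hsfin, hKs, hsK⟩ :=
    hK.exists_finite_subcover_meeting hopen (hcov ▸ subset_univ K)
  have : Nonempty X := ⟨x⟩
  choose! p hp using hsK
  have hs : s.Nonempty := by
    obtain ⟨W, hW, -⟩ := hKs hx
    exact ⟨W, hW⟩
  refine ⟨hsfin.toFinset.toList, hζ _ ?_ ?_, p '' s, hsfin.image p, ?_, ?_, ?_⟩
  · simpa [Finset.toList_eq_nil] using hs.ne_empty
  · exact fun W hW => hs𝒲 (by simpa using hW)
  · intro W hW
    rw [Finset.mem_toList, Finite.mem_toFinset] at hW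
    exact ⟨p W, mem_image_of_mem p hW, (hp W hW).2⟩
  · intro y hy hyK
    obtain ⟨W, hW, hyW⟩ := hKs hyK
    exact mem_iInter₂.mp hy W (by simpa using hW) hyW
  · rw [eq_empty_iff_forall_notMem]
    rintro _ ⟨⟨W, hW, rfl⟩, hpKc⟩
    exact hpKc ((hp W hW).1)

end

def psiBasicNbhds (𝒜 : Set (Set ℕ)) : Set (Set (ℕ ⊕ ↥𝒜)) :=
  {S | ∃ A : ↥𝒜, ∃ D : Set ℕ, D.Finite ∧ S = {Sum.inr A} ∪ Sum.inl '' ((A : Set ℕ) \ D)}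

theorem isOpen_of_mem_psiBasicNbhds {𝒜 : Set (Set ℕ)} {S : Set (ℕ ⊕ ↥𝒜)}
    (hS : S ∈ psiBasicNbhds 𝒜) : @IsOpen _ (psiSpace 𝒜) S :=
  TopologicalSpace.GenerateOpen.basic _ (mem_union_right _ hS)

theorem sUnion_psiBasicNbhds {𝒜 : Set (Set ℕ)} (hcov : ⋃₀ 𝒜 = univ) :
    ⋃₀ psiBasicNbhds 𝒜 = univ := by
  refine eq_univ_of_forall fun x => ?_
  have hnbhd (A : ↥𝒜) : {Sum.inr A} ∪ Sum.inl '' ((A : Set ℕ) \ ∅) ∈ psiBasicNbhds 𝒜 :=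
    ⟨A, ∅, finite_empty, rfl⟩
  cases x with
  | inl n =>
    obtain ⟨A, hA, hnA⟩ := mem_sUnion.mp (hcov ▸ mem_univ n)
    exact ⟨_, hnbhd ⟨A, hA⟩, Or.inr ⟨n, ⟨hnA, notMem_empty n⟩, rfl⟩⟩
  | inr A => exact ⟨_, hnbhd A, Or.inl rfl⟩

theorem stmt4_general (𝒜 : Set (Set ℕ))
    (hcov : ⋃₀ 𝒜 = (univ : Set ℕ))
    (ζ : Set (List (Set (ℕ ⊕ ↥𝒜))))
    (hζ : ζ = {L | L ≠ [] ∧ ∀ V ∈ L, ∃ A : ↥𝒜, ∃ D : Set ℕ, D.Finite ∧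
        V = {Sum.inr A} ∪ Sum.inl '' ((A : Set ℕ) \ D)}) :
    @piVnetwork (ℕ ⊕ ↥𝒜) (psiSpace 𝒜)
      {K : Set (ℕ ⊕ ↥𝒜) | @IsCompact _ (psiSpace 𝒜) K ∧ K.Nonempty} ζ := by
  let _ : TopologicalSpace (ℕ ⊕ ↥𝒜) := psiSpace 𝒜
  subst hζ
  exact piVnetwork_compacts_of_isOpen_cover (fun _ => isOpen_of_mem_psiBasicNbhds)
    (sUnion_psiBasicNbhds hcov) fun _ hL hL𝒲 => ⟨hL, hL𝒲⟩

theorem stmt4 (𝒜 : Set (Set ℕ)) (hAD : ADfamily 𝒜) (hunc : ¬ 𝒜.Countable)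
    (hcov : ⋃₀ 𝒜 = (univ : Set ℕ))
    (ζ : Set (List (Set (ℕ ⊕ ↥𝒜))))
    (hζ : ζ = {L | L ≠ [] ∧ ∀ V ∈ L, ∃ A : ↥𝒜, ∃ D : Set ℕ, D.Finite ∧
        V = {Sum.inr A} ∪ Sum.inl '' ((A : Set ℕ) \ D)}) :
    @piVnetwork (ℕ ⊕ ↥𝒜) (psiSpace 𝒜)
      {K : Set (ℕ ⊕ ↥𝒜) | @IsCompact _ (psiSpace 𝒜) K ∧ K.Nonempty} ζ :=
  stmt4_general 𝒜 hcov ζ hζ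
end

section
/- Let 𝒜 be an uncountable almost disjoint family on ω with ⋃𝒜 = ω, X = Ψ(𝒜) the Mrówka–Isbell space, and ζ = {(V₁,…,Vₙ) : Vᵢ = {Aᵢ} ∪ (Aᵢ \ Dᵢ) for some Aᵢ ∈ 𝒜 and finite Dᵢ ⊆ ω}. Then ζ is not a π_V-network of X; in fact, for the open set U = ω ≠ X, every tuple (V₁,…,Vₙ) ∈ ζ satisfies ⋂ᵢ Vᵢᶜ ⊄ U. -/
/-!
Every basic neighbourhood {A} ∪ (A \ D) contains exactly one point of 𝒜, so a finite tuple
(V₁, …, Vₙ) of them meets only finitely many points of 𝒜. As 𝒜 is infinite, some B ∈ 𝒜 lies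
in ⋂ᵢ Vᵢᶜ, which is therefore not contained in ω. Since ω is a proper open subset of Ψ(𝒜) (a union
of isolated points), no tuple of ζ can witness the π_V-network condition for U = ω.
-/

open Set

universe u

variable {X : Type u}

theorem Sum.preimage_inr_singleton_inr_union_image_inl {α β : Type*} (b : β) (S : Set α) :
    Sum.inr ⁻¹' ({Sum.inr b} ∪ Sum.inl '' S : Set (α ⊕ β)) = {b} := by
  ext; simp

theorem Sum.range_inl_ne_univ {α β : Type*} [Nonempty β] :
    range (Sum.inl : α → α ⊕ β) ≠ univ := fun h =>
  have ⟨_, hb⟩ : Sum.inr (Classical.arbitrary β) ∈ range (Sum.inl : α → α ⊕ β) := h ▸ mem_univ _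
  Sum.inl_ne_inr hb

theorem Sum.exists_inr_mem_iInter_compl {α β : Type*} [Infinite β] (L : List (Set (α ⊕ β)))
    (hL : ∀ V ∈ L, (Sum.inr ⁻¹' V).Finite) : ∃ b, Sum.inr b ∈ ⋂ V ∈ L, Vᶜ := by
  obtain ⟨b, hb⟩ := (L.finite_toSet.biUnion hL).infinite_compl.nonempty
  exact ⟨b, by simpa using hb⟩

theorem psiSpace_isOpen_range_inl (𝒜 : Set (Set ℕ)) :
    @IsOpen _ (psiSpace 𝒜) (range Sum.inl) := by
  let := psiSpace 𝒜
  rw [← iUnion_singleton_eq_range]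
  exact isOpen_iUnion fun n => TopologicalSpace.isOpen_generateFrom_of_mem (Or.inl ⟨n, rfl⟩)

theorem stmt5_general (𝒜 : Set (Set ℕ)) (hunc : ¬ 𝒜.Countable)
    (ζ : Set (List (Set (ℕ ⊕ ↥𝒜))))
    (hζ : ζ = {L | L ≠ [] ∧ ∀ V ∈ L, ∃ A : ↥𝒜, ∃ D : Set ℕ, D.Finite ∧
        V = {Sum.inr A} ∪ Sum.inl '' ((A : Set ℕ) \ D)}) :
    (∀ L ∈ ζ, ¬ ((⋂ V ∈ L, Vᶜ) ⊆ Sum.inl '' (univ : Set ℕ))) ∧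
    ¬ (∀ U : Set (ℕ ⊕ ↥𝒜), @IsOpen _ (psiSpace 𝒜) U → U ≠ univ →
        ∃ L ∈ ζ, ∃ F : Set (ℕ ⊕ ↥𝒜), F.Finite ∧ (∀ V ∈ L, (F ∩ V).Nonempty) ∧
          (⋂ V ∈ L, Vᶜ) ⊆ U ∧ F ∩ U = ∅) := by
  have : Infinite 𝒜 := Set.Infinite.to_subtype fun h => hunc h.countable
  have not_subset : ∀ L ∈ ζ, ¬ ((⋂ V ∈ L, Vᶜ) ⊆ Sum.inl '' (univ : Set ℕ)) := by
    rintro L hL hsub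
    rw [hζ] at hL
    obtain ⟨B, hB⟩ := Sum.exists_inr_mem_iInter_compl L fun V hV => by
      obtain ⟨A, D, -, rfl⟩ := hL.2 V hV
      simp only [Sum.preimage_inr_singleton_inr_union_image_inl, finite_singleton]
    obtain ⟨n, -, hn⟩ := hsub hB
    exact Sum.inl_ne_inr hn
  refine ⟨not_subset, fun hnet => ?_⟩
  rw [image_univ] at not_subset
  obtain ⟨L, hL, -, -, -, hsub, -⟩ :=
    hnet _ (psiSpace_isOpen_range_inl 𝒜) Sum.range_inl_ne_univ
  exact not_subset L hL hsub

theorem stmt5 (𝒜 : Set (Set ℕ)) (hAD : ADfamily 𝒜) (hunc : ¬ 𝒜.Countable)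
    (hcov : ⋃₀ 𝒜 = (univ : Set ℕ))
    (ζ : Set (List (Set (ℕ ⊕ ↥𝒜))))
    (hζ : ζ = {L | L ≠ [] ∧ ∀ V ∈ L, ∃ A : ↥𝒜, ∃ D : Set ℕ, D.Finite ∧
        V = {Sum.inr A} ∪ Sum.inl '' ((A : Set ℕ) \ D)}) :
    (∀ L ∈ ζ, ¬ ((⋂ V ∈ L, Vᶜ) ⊆ Sum.inl '' (univ : Set ℕ))) ∧
    ¬ (∀ U : Set (ℕ ⊕ ↥𝒜), @IsOpen _ (psiSpace 𝒜) U → U ≠ univ →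
        ∃ L ∈ ζ, ∃ F : Set (ℕ ⊕ ↥𝒜), F.Finite ∧ (∀ V ∈ L, (F ∩ V).Nonempty) ∧
          (⋂ V ∈ L, Vᶜ) ⊆ U ∧ F ∩ U = ∅) :=
  stmt5_general 𝒜 hunc ζ hζ
end
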